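/- Let 0 < p ≤ 1, let 𝒥 be a finite or countable family of cubes in ℝⁿ, and for each Q ∈ 𝒥 let f_Q be a nonnegative integrable function on ℝⁿ with support contained in Q. Then there exists a constant C depending only on n and p such that ‖ Σ_{Q∈𝒥} f_Q ‖_{L^p(ℝⁿ)} ≤ C ‖ Σ_{Q∈𝒥} ( |Q|^{−1} ∫_Q f_Q(x) dx ) χ_{Q*} ‖_{L^p(ℝⁿ)}. -/

import Mathlib

open MeasureTheory Real Complex Set Filter Function
open scoped FourierTransform ENNReal NNReal Topology SchwartzMap Classical

noncomputable section

/-- Euclidean space `ℝⁿ`. -/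
abbrev En (n : ℕ) : Type := EuclideanSpace ℝ (Fin n)

/-- Euclidean space `ℝ^{mn} = (ℝⁿ)^m`. -/
abbrev Emn (m n : ℕ) : Type := EuclideanSpace ℝ (Fin m × Fin n)

/-- The `i`-th `ℝⁿ`-component of a point of `ℝ^{mn}`. -/
def comp {m n : ℕ} (y : Emn m n) (i : Fin m) : En n := WithLp.toLp 2 (fun k => y (i, k))

/-- The product-type Sobolev norm `‖f‖_{W^{(s₁,…,s_m)}}`, interpreted as `∞`
if `f ∉ L²`. -/
def sobolevNorm {m n : ℕ} (s : Fin m → ℝ) (f : Emn m n → ℂ) : ℝ≥0∞ :=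
  if MemLp f 2 volume then
    (∫⁻ y : Emn m n, (‖𝓕 f y‖₊ : ℝ≥0∞) ^ (2 : ℕ) *
      ∏ i : Fin m, ENNReal.ofReal ((1 + ‖comp y i‖ ^ 2) ^ (s i)) ∂volume) ^ (1 / 2 : ℝ)
  else ∞

/-- `A = sup_{j ∈ ℤ} ‖σ(2^j ·) ψ̂‖_{W^{(s₁,…,s_m)}}`. -/
def multNorm {m n : ℕ} (ψ : 𝓢(Emn m n, ℂ)) (s : Fin m → ℝ) (σ : Emn m n → ℂ) : ℝ≥0∞ :=
  ⨆ j : ℤ, sobolevNorm s (fun ξ => σ ((2 : ℝ) ^ j • ξ) * 𝓕 (⇑ψ) ξ)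

/-- `ψ̂` is supported in the annulus `1/2 ≤ |ξ| ≤ 2` and `Σ_{j∈ℤ} ψ̂(2^{-j} ξ) = 1`
for `ξ ≠ 0`. -/
def goodPsi {m n : ℕ} (ψ : 𝓢(Emn m n, ℂ)) : Prop :=
  (∀ ξ : Emn m n, 𝓕 (⇑ψ) ξ ≠ 0 → 1 / 2 ≤ ‖ξ‖ ∧ ‖ξ‖ ≤ 2) ∧
  ∀ ξ : Emn m n, ξ ≠ 0 → ∑' j : ℤ, 𝓕 (⇑ψ) ((2 : ℝ) ^ (-j) • ξ) = 1

/-- The phase factor `e^{2πi x·(ξ₁ + ⋯ + ξ_m)}`. -/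
def phase {m n : ℕ} (x : En n) (ξ : Emn m n) : ℂ :=
  Complex.exp (2 * (Real.pi : ℂ) * Complex.I * ((∑ i : Fin m, (inner ℝ x (comp ξ i) : ℝ) : ℝ) : ℂ))

/-- The `m`-linear Fourier multiplier operator `T_σ`. -/
def Tmul {m n : ℕ} (σ : Emn m n → ℂ) (f : Fin m → En n → ℂ) (x : En n) : ℂ :=
  ∫ ξ : Emn m n, phase x ξ * (σ ξ * ∏ i : Fin m, 𝓕 (f i) (comp ξ i))

/-- The Hardy space quasinorm `‖f‖_{H^p} = ‖sup_{t>0} |Φ_t * f|‖_{L^p}`, `0 < p ≤ 1`. -/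
def hardyNorm {n : ℕ} (Φ : 𝓢(En n, ℂ)) (p : ℝ) (f : En n → ℂ) : ℝ≥0∞ :=
  (∫⁻ x : En n, (⨆ t : Set.Ioi (0 : ℝ),
      (‖∫ y : En n, ((t : ℝ) ^ (-(n : ℝ))) • Φ ((t : ℝ)⁻¹ • (x - y)) * f y‖₊ : ℝ≥0∞)) ^ p
    ∂volume) ^ (1 / p)

/-- `‖f‖_{H^p}` for `0 < p ≤ ∞`: the Hardy quasinorm for `p ≤ 1` and the Lebesgue
norm for `p > 1`. -/
def hNorm {n : ℕ} (Φ : 𝓢(En n, ℂ)) (p : ℝ≥0∞) (f : En n → ℂ) : ℝ≥0∞ :=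
  if p ≤ 1 then hardyNorm Φ p.toReal f else eLpNorm f p volume

/-- A bounded measurable function. -/
def BddMeas {α : Type*} [MeasurableSpace α] (σ : α → ℂ) : Prop :=
  Measurable σ ∧ ∃ M : ℝ, ∀ x, ‖σ x‖ ≤ M

/-- The axis-parallel closed cube with center `c` and side length `h`. -/
def cube {n : ℕ} (c : En n) (h : ℝ) : Set (En n) := {x | ∀ k, |x k - c k| ≤ h / 2}

/-! Write `F = ∑ f_Q`, `G = ∑ a_Q χ_{2Q}` with `a_Q` the average of `f_Q`, and
`m_Q = ess inf_Q G ≥ a_Q`. For `p < 1`, Hölder's inequality gives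
`∫ F^p ≤ (∫ F G^{p-1})^p (∫ G^p)^{1-p}`, and `∫ F G^{p-1} ≤ ∑ a_Q |Q| m_Q^{p-1}`. Writing
`m^{p-1} = ∫_m^∞ (1-p) t^{p-2} dt`, it suffices to have `∑_{m_Q < t} a_Q |Q| ≤ ∫ min(G, K t)` with
`K = 4^n + 1`, after which integrating in `t` yields `(K^{1-p}/p) ∫ G^p`. The level estimate is a
covering argument: the cubes through a point `x` with `m_Q < t` fall into at most `K` classes, each
containing a cube `Q₁` with `Q₁ ⊆ 2Q` for every `Q` of the class; at a point of `Q₁` where `G < t`,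
the total weight of the class is below `t`. For `p = 1` the estimate is just `|Q| ≤ |2Q|`. -/

lemma measurableSet_cube {n : ℕ} (c : En n) (h : ℝ) : MeasurableSet (cube c h) := by
  simp only [cube, ofPred_forall]
  exact (isClosed_iInter fun k => isClosed_le (by fun_prop) continuous_const).measurableSet

lemma volume_cube {n : ℕ} (c : En n) {h : ℝ} (hh : 0 ≤ h) :
    volume (cube c h) = ENNReal.ofReal (h ^ n) := by
  have hpre : cube c h = (MeasurableEquiv.toLp 2 (Fin n → ℝ)).symm ⁻¹'
      Set.pi univ fun k => Icc (c k - h / 2) (c k + h / 2) := by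
    ext x
    simp only [cube, mem_ofPred_eq, mem_preimage, Set.mem_pi, mem_univ, forall_true_left,
      mem_Icc, abs_le, MeasurableEquiv.toLp_symm_apply, sub_le_iff_le_add, neg_le_sub_iff_le_add]
    grind
  rw [hpre, (EuclideanSpace.volume_preserving_symm_measurableEquiv_toLp (Fin n)).measure_preimage
    (MeasurableSet.univ_pi fun k => measurableSet_Icc).nullMeasurableSet, volume_pi_pi]
  simp [Real.volume_Icc, ENNReal.ofReal_pow hh]

lemma cube_subset_cube {n : ℕ} (c : En n) {h h' : ℝ} (hh : h ≤ h') : cube c h ⊆ cube c h' :=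
  fun _ hx k => (hx k).trans (by linarith)

lemma cube_subset_cube_sqrt_mul {n : ℕ} (c : En n) {h : ℝ} (hh : 0 ≤ h) :
    cube c h ⊆ cube c (√n * h) := fun x hx k => by
  have : (1 : ℝ) ≤ √n := Real.one_le_sqrt.2 (by exact_mod_cast k.pos)
  exact (hx k).trans (by nlinarith)

lemma cube_subset_cube_two_mul {n : ℕ} {c c' : En n} {h h' : ℝ}
    (hc : ∀ k, |c k - c' k| + h / 2 ≤ h') : cube c h ⊆ cube c' (2 * h') := fun x hx k => by
  have := abs_sub_le (x k) (c k) (c' k)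
  linarith [hx k, hc k]

lemma cube_subset_cube_two_mul_of_mem {n : ℕ} {c c' x : En n} {h h' : ℝ} (hx : x ∈ cube c h)
    (hx' : x ∈ cube c' h') (hh : 2 * h ≤ h') : cube c h ⊆ cube c' (2 * h') :=
  cube_subset_cube_two_mul fun k => by
    linarith [abs_sub_le (c k) (x k) (c' k), abs_sub_comm (c k) (x k), hx k, hx' k]

lemma cube_subset_cube_two_mul_of_floor_eq {n : ℕ} {c c' x : En n} {h h' δ : ℝ} (hδ : 0 < δ)
    (hδh : 2 * δ ≤ h) (hh : h ≤ h') (hfl : ∀ k, ⌊(c k - x k) / δ⌋ = ⌊(c' k - x k) / δ⌋) :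
    cube c h ⊆ cube c' (2 * h') :=
  cube_subset_cube_two_mul fun k => by
    have hlt := Int.abs_sub_lt_one_of_floor_eq_floor (hfl k)
    rw [← sub_div, sub_sub_sub_cancel_right, abs_div, abs_of_pos hδ, div_lt_one hδ] at hlt
    linarith

lemma floor_div_mem_Icc {y δ : ℝ} (hδ : 0 < δ) (hy : |y| < 2 * δ) :
    ⌊y / δ⌋ ∈ Finset.Icc (-2 : ℤ) 1 := by
  rw [abs_lt] at hy
  have h1 : -2 ≤ ⌊y / δ⌋ := by
    rw [Int.le_floor, le_div_iff₀ hδ]; push_cast; linarith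
  have h2 : ⌊y / δ⌋ < 2 := by
    rw [Int.floor_lt, div_lt_iff₀ hδ]; push_cast; linarith
  exact Finset.mem_Icc.2 ⟨h1, by omega⟩

section CubeClass

variable {n : ℕ} {ι : Type*} {J : Finset ι} {c : ι → En n} {h : ι → ℝ} {x : En n} {j₀ : ι}

/-- Meant for `j₀` a smallest cube through `x`. -/
def cubeClass (c : ι → En n) (h : ι → ℝ) (x : En n) (j₀ j : ι) : Option (Fin n → ℤ) :=
  if h j < 2 * h j₀ then some fun k => ⌊(c j k - x k) / (h j₀ / 2)⌋ else none

lemma card_image_cubeClass_le (hx : ∀ j ∈ J, x ∈ cube (c j) (h j)) (hj₀ : 0 < h j₀) :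
    (J.image (cubeClass c h x j₀)).card ≤ 4 ^ n + 1 := by
  have hsub : J.image (cubeClass c h x j₀) ⊆
      insert none ((Fintype.piFinset fun _ : Fin n => Finset.Icc (-2 : ℤ) 1).image some) := by
    simp only [Finset.subset_iff, Finset.mem_image, Finset.mem_insert]
    rintro _ ⟨j, hj, rfl⟩
    by_cases hsmall : h j < 2 * h j₀
    · refine Or.inr ⟨_, Fintype.mem_piFinset.2 fun k => floor_div_mem_Icc (half_pos hj₀) ?_,
        (if_pos hsmall).symm⟩
      linarith [hx j hj k, abs_sub_comm (c j k) (x k)]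
    · exact Or.inl (if_neg hsmall)
  refine (Finset.card_le_card hsub).trans ((Finset.card_insert_le _ _).trans ?_)
  simpa using Finset.card_image_le.trans (by simp [Fintype.card_piFinset] : _ ≤ 4 ^ n)

lemma exists_cube_subset_of_cubeClass_eq (hx : ∀ j ∈ J, x ∈ cube (c j) (h j)) (hj₀ : j₀ ∈ J)
    (hpos : 0 < h j₀) (hmin : ∀ j ∈ J, h j₀ ≤ h j) (v : Option (Fin n → ℤ)) :
    ∃ j₁ ∈ J, ∀ i ∈ J, cubeClass c h x j₀ i = v → cube (c j₁) (h j₁) ⊆ cube (c i) (2 * h i) := by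
  rcases v with _ | u
  · refine ⟨j₀, hj₀, fun i hi hclass => cube_subset_cube_two_mul_of_mem (hx j₀ hj₀) (hx i hi)
      (not_lt.1 fun hlt => ?_)⟩
    simp [cubeClass, hlt] at hclass
  rcases (J.filter fun j => cubeClass c h x j₀ j = some u).eq_empty_or_nonempty with hempty | hne
  · refine ⟨j₀, hj₀, fun i hi hclass => ?_⟩
    have : i ∈ J.filter fun j => cubeClass c h x j₀ j = some u := Finset.mem_filter.2 ⟨hi, hclass⟩
    simp [hempty] at this
  obtain ⟨j₁, hj₁, hmin₁⟩ :=
    (J.filter fun j => cubeClass c h x j₀ j = some u).exists_min_image h hne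
  have hcell : ∀ j, cubeClass c h x j₀ j = some u → ∀ k, ⌊(c j k - x k) / (h j₀ / 2)⌋ = u k := by
    intro j hj k
    simp only [cubeClass] at hj
    split_ifs at hj
    exact congrFun (Option.some_injective _ hj) k
  rw [Finset.mem_filter] at hj₁
  refine ⟨j₁, hj₁.1, fun i hi hclass => cube_subset_cube_two_mul_of_floor_eq (x := x)
    (half_pos hpos) (by linarith [hmin j₁ hj₁.1]) (hmin₁ i (Finset.mem_filter.2 ⟨hi, hclass⟩))
    fun k => ?_⟩
  rw [hcell _ hj₁.2, hcell _ hclass]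

end CubeClass

theorem sum_le_of_exists_mem_cube_sum_lt {n : ℕ} {ι : Type*} (J : Finset ι) {c : ι → En n}
    {h : ι → ℝ} (hpos : ∀ i, 0 < h i) {x : En n} (hx : ∀ j ∈ J, x ∈ cube (c j) (h j))
    (w : ι → ℝ≥0∞) (t : ℝ≥0∞)
    (hlight : ∀ j ∈ J, ∃ z ∈ cube (c j) (h j), ∑ i ∈ J with z ∈ cube (c i) (2 * h i), w i < t) :
    ∑ j ∈ J, w j ≤ (4 ^ n + 1) * t := by
  rcases J.eq_empty_or_nonempty with rfl | hJ
  · simp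
  obtain ⟨j₀, hj₀, hmin⟩ := J.exists_min_image h hJ
  set κ := cubeClass c h x j₀
  have hclass : ∀ v, ∑ i ∈ J with κ i = v, w i ≤ t := fun v => by
    obtain ⟨j₁, hj₁, hsub⟩ := exists_cube_subset_of_cubeClass_eq hx hj₀ (hpos j₀) hmin v
    obtain ⟨z, hz, hsum⟩ := hlight j₁ hj₁
    refine le_trans (Finset.sum_le_sum_of_subset fun i hi => ?_) hsum.le
    simp only [Finset.mem_filter] at hi ⊢
    exact ⟨hi.1, hsub i hi.1 hi.2 hz⟩
  calc ∑ j ∈ J, w j = ∑ v ∈ J.image κ, ∑ j ∈ J with κ j = v, w j :=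
        (Finset.sum_fiberwise_of_maps_to (fun j hj => Finset.mem_image_of_mem κ hj) w).symm
    _ ≤ (J.image κ).card • t := Finset.sum_le_card_nsmul _ _ _ fun v _ => hclass v
    _ ≤ (4 ^ n + 1) * t := by
        rw [nsmul_eq_mul]
        gcongr
        exact_mod_cast card_image_cubeClass_le hx (hpos j₀)

lemma lintegral_Ioi_rpow_sub_two {p : ℝ} (hp : p < 1) {s : ℝ} (hs : 0 < s) :
    ∫⁻ t in Ioi s, ENNReal.ofReal ((1 - p) * t ^ (p - 2)) = ENNReal.ofReal (s ^ (p - 1)) := by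
  rw [← ofReal_integral_eq_lintegral_ofReal
    ((integrableOn_Ioi_rpow_of_lt (by linarith) hs).const_mul _)
    ((ae_restrict_iff' measurableSet_Ioi).2 (ae_of_all _ fun t ht =>
      mul_nonneg (by linarith) (rpow_nonneg (hs.trans ht).le _))),
    integral_const_mul, integral_Ioi_rpow_of_lt (by linarith) hs]
  congr 1
  rw [show p - 2 + 1 = p - 1 by ring]
  field_simp [show p - 1 ≠ 0 by linarith]
  ring

lemma lintegral_Ioc_rpow_sub_one {p : ℝ} (hp : 0 < p) {s : ℝ} (hs : 0 ≤ s) :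
    ∫⁻ t in Ioc 0 s, ENNReal.ofReal (t ^ (p - 1)) = ENNReal.ofReal (s ^ p / p) := by
  rw [← ofReal_integral_eq_lintegral_ofReal
    ((intervalIntegrable_iff_integrableOn_Ioc_of_le hs).1
      (intervalIntegral.intervalIntegrable_rpow' (by linarith)))
    ((ae_restrict_iff' measurableSet_Ioc).2 (ae_of_all _ fun t ht => rpow_nonneg ht.1.le _)),
    ← intervalIntegral.integral_of_le hs, integral_rpow (Or.inl (by linarith)),
    sub_add_cancel, zero_rpow hp.ne', sub_zero]

lemma mul_rpow_sub_one_le_lintegral {p : ℝ} (hp : p < 1) {b w : ℝ≥0∞} (hbw : b ≠ 0 → w ≠ 0) :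
    b * w ^ (p - 1) ≤ ∫⁻ t in Ioi (0 : ℝ),
      ENNReal.ofReal ((1 - p) * t ^ (p - 2)) * (if w < ENNReal.ofReal t then b else 0) := by
  rcases eq_or_ne b 0 with rfl | hb
  · simp
  rcases eq_or_ne w ⊤ with rfl | hw
  · simp [ENNReal.top_rpow_of_neg (by linarith : p - 1 < 0)]
  have hw₀ : 0 < w.toReal := ENNReal.toReal_pos (hbw hb) hw
  calc b * w ^ (p - 1) = ∫⁻ t in Ioi w.toReal, ENNReal.ofReal ((1 - p) * t ^ (p - 2)) * b := by
        rw [lintegral_mul_const _ (by fun_prop), lintegral_Ioi_rpow_sub_two hp hw₀, mul_comm,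
          ← ENNReal.ofReal_rpow_of_pos hw₀, ENNReal.ofReal_toReal hw]
    _ = ∫⁻ t in Ioi w.toReal,
          ENNReal.ofReal ((1 - p) * t ^ (p - 2)) * (if w < ENNReal.ofReal t then b else 0) :=
        setLIntegral_congr_fun measurableSet_Ioi fun t ht => by
          rw [if_pos ((ENNReal.lt_ofReal_iff_toReal_lt hw).2 ht)]
    _ ≤ _ := lintegral_mono_set (Ioi_subset_Ioi hw₀.le)

lemma lintegral_rpow_sub_two_mul_min_le {p : ℝ} (hp0 : 0 < p) (hp1 : p < 1) {K : ℝ} (hK : 0 < K)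
    (a : ℝ≥0∞) :
    ∫⁻ t in Ioi (0 : ℝ), ENNReal.ofReal ((1 - p) * t ^ (p - 2)) * min a (ENNReal.ofReal (K * t))
      ≤ ENNReal.ofReal (K ^ (1 - p) / p) * a ^ p := by
  rcases eq_or_ne a 0 with rfl | ha₀
  · simp
  rcases eq_or_ne a ⊤ with rfl | ha
  · simp [ENNReal.top_rpow_of_pos hp0, ENNReal.mul_top, hp0, rpow_pos_of_pos hK]
  set A := a.toReal
  have hA : 0 < A := ENNReal.toReal_pos ha₀ ha
  -- Split at `s = A / K`, where the two arguments of the minimum cross.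
  set s := A / K with hs_def
  have hs : 0 < s := div_pos hA hK
  have hhead : ∫⁻ t in Ioc 0 s,
      ENNReal.ofReal ((1 - p) * t ^ (p - 2)) * min a (ENNReal.ofReal (K * t))
        ≤ ENNReal.ofReal ((1 - p) * K) * ENNReal.ofReal (s ^ p / p) := by
    rw [← lintegral_Ioc_rpow_sub_one hp0 hs.le, ← lintegral_const_mul _ (by fun_prop)]
    refine setLIntegral_mono (by fun_prop) fun t ht => ?_
    rw [← ENNReal.ofReal_mul (by nlinarith)]
    refine (mul_le_mul_right (min_le_right _ _) _).trans_eq ?_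
    rw [← ENNReal.ofReal_mul (mul_nonneg (by linarith) (rpow_nonneg ht.1.le _))]
    congr 1
    rw [show p - 1 = p - 2 + 1 by ring, rpow_add_one ht.1.ne']
    ring
  have htail : ∫⁻ t in Ioi s,
      ENNReal.ofReal ((1 - p) * t ^ (p - 2)) * min a (ENNReal.ofReal (K * t))
        ≤ ENNReal.ofReal (s ^ (p - 1)) * ENNReal.ofReal A := by
    rw [ENNReal.ofReal_toReal ha, ← lintegral_Ioi_rpow_sub_two hp1 hs,
      ← lintegral_mul_const _ (by fun_prop)]
    exact setLIntegral_mono (by fun_prop) fun t _ => mul_le_mul_right (min_le_left _ _) _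
  have halg : (1 - p) * K * (s ^ p / p) + s ^ (p - 1) * A = K ^ (1 - p) / p * A ^ p := by
    rw [hs_def, div_rpow hA.le hK.le, div_rpow hA.le hK.le, rpow_sub_one hA.ne',
      rpow_sub_one hK.ne', rpow_sub hK, rpow_one]
    field_simp
    ring
  rw [← Ioc_union_Ioi_eq_Ioi hs.le, lintegral_union measurableSet_Ioi (Ioc_disjoint_Ioi le_rfl)]
  refine (add_le_add hhead htail).trans_eq ?_
  rw [← ENNReal.ofReal_toReal ha, ENNReal.ofReal_rpow_of_pos hA,
    ← ENNReal.ofReal_mul (by nlinarith), ← ENNReal.ofReal_mul (by positivity),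
    ← ENNReal.ofReal_add (mul_nonneg (by nlinarith) (by positivity)) (by positivity),
    ← ENNReal.ofReal_mul (by positivity), halg]

theorem tsum_mul_rpow_sub_one_le_lintegral_rpow {α ι : Type*} [MeasurableSpace α]
    {μ : Measure α} [SFinite μ] [Countable ι] {p : ℝ} (hp0 : 0 < p) (hp1 : p < 1) {K : ℝ}
    (hK : 0 < K) {G : α → ℝ≥0∞} (hG : Measurable G) {b m : ι → ℝ≥0∞}
    (hbm : ∀ i, b i ≠ 0 → m i ≠ 0)
    (hlevel : ∀ t : ℝ, ∑' i, (if m i < ENNReal.ofReal t then b i else 0)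
      ≤ ∫⁻ x, min (G x) (ENNReal.ofReal (K * t)) ∂μ) :
    ∑' i, b i * m i ^ (p - 1) ≤ ENNReal.ofReal (K ^ (1 - p) / p) * ∫⁻ x, G x ^ p ∂μ := by
  set ρ : ℝ → ℝ≥0∞ := fun t => ENNReal.ofReal ((1 - p) * t ^ (p - 2))
  have hρ : Measurable ρ := by fun_prop
  have hlayer : ∀ i, Measurable fun t => ρ t * (if m i < ENNReal.ofReal t then b i else 0) :=
    fun i => hρ.mul (Measurable.ite (measurableSet_lt measurable_const ENNReal.measurable_ofReal)
      measurable_const measurable_const)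
  calc ∑' i, b i * m i ^ (p - 1)
      ≤ ∑' i, ∫⁻ t in Ioi (0 : ℝ), ρ t * (if m i < ENNReal.ofReal t then b i else 0) :=
        ENNReal.tsum_le_tsum fun i => mul_rpow_sub_one_le_lintegral hp1 (hbm i)
    _ = ∫⁻ t in Ioi (0 : ℝ), ρ t * ∑' i, (if m i < ENNReal.ofReal t then b i else 0) := by
        rw [← lintegral_tsum fun i => (hlayer i).aemeasurable]
        simp only [ENNReal.tsum_mul_left]
    _ ≤ ∫⁻ t in Ioi (0 : ℝ), ∫⁻ x, ρ t * min (G x) (ENNReal.ofReal (K * t)) ∂μ := by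
        refine lintegral_mono fun t => ?_
        rw [lintegral_const_mul _ (hG.min (by fun_prop))]
        exact mul_le_mul_right (hlevel t) _
    _ = ∫⁻ x, (∫⁻ t in Ioi (0 : ℝ), ρ t * min (G x) (ENNReal.ofReal (K * t))) ∂μ :=
        lintegral_lintegral_swap ((hρ.comp measurable_fst).mul
          ((hG.comp measurable_snd).min (by fun_prop))).aemeasurable
    _ ≤ ∫⁻ x, ENNReal.ofReal (K ^ (1 - p) / p) * G x ^ p ∂μ :=
        lintegral_mono fun x => lintegral_rpow_sub_two_mul_min_le hp0 hp1 hK (G x)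
    _ = ENNReal.ofReal (K ^ (1 - p) / p) * ∫⁻ x, G x ^ p ∂μ :=
        lintegral_const_mul _ (hG.pow_const p)

lemma ENNReal.rpow_le_rpow_of_nonpos {x y : ℝ≥0∞} {z : ℝ} (hxy : x ≤ y) (hz : z ≤ 0) :
    y ^ z ≤ x ^ z := by
  rw [← neg_neg z, ENNReal.rpow_neg y, ENNReal.rpow_neg x]
  exact ENNReal.inv_le_inv.2 (ENNReal.rpow_le_rpow hxy (neg_nonneg.2 hz))

lemma exists_mem_lt_of_essInf_restrict_lt {α β : Type*} [MeasurableSpace α] [CompleteLinearOrder β]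
    {μ : Measure α} {s : Set α} (hs : MeasurableSet s) {f : α → β} {T : β}
    (hT : essInf f (μ.restrict s) < T) : ∃ z ∈ s, f z < T := by
  by_contra! hle
  exact hT.not_ge (le_essInf_of_ae_le _ ((ae_restrict_iff' hs).2 (ae_of_all _ hle)))

lemma lintegral_mul_rpow_le_mul_essInf_rpow {α : Type*} [MeasurableSpace α] {μ : Measure α}
    {s : Set α} {u G : α → ℝ≥0∞} (hu : AEMeasurable u μ)
    (hsupp : support u ⊆ s) {q : ℝ} (hq : q ≤ 0) :
    ∫⁻ x, u x * G x ^ q ∂μ ≤ (∫⁻ x, u x ∂μ) * essInf G (μ.restrict s) ^ q :=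
  calc ∫⁻ x, u x * G x ^ q ∂μ = ∫⁻ x in s, u x * G x ^ q ∂μ :=
        (setLIntegral_eq_of_support_subset ((support_mul_subset_left _ _).trans hsupp)).symm
    _ ≤ ∫⁻ x in s, u x * essInf G (μ.restrict s) ^ q ∂μ :=
        lintegral_mono_ae <| (ae_essInf_le (f := G)).mono fun x hx =>
          mul_le_mul_right (ENNReal.rpow_le_rpow_of_nonpos hx hq) _
    _ = (∫⁻ x in s, u x ∂μ) * essInf G (μ.restrict s) ^ q := lintegral_mul_const'' _ hu.restrict
    _ ≤ (∫⁻ x, u x ∂μ) * essInf G (μ.restrict s) ^ q :=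
        mul_le_mul_left (setLIntegral_le_lintegral _ _) _

theorem lintegral_rpow_le_lintegral_mul_rpow_sub_one {α : Type*} [MeasurableSpace α]
    {μ : Measure α} {p : ℝ} (hp0 : 0 < p) (hp1 : p < 1) {F G : α → ℝ≥0∞}
    (hF : AEMeasurable F μ) (hG : AEMeasurable G μ) (hGtop : ∀ᵐ x ∂μ, G x ≠ ⊤)
    (hFG : ∀ᵐ x ∂μ, G x = 0 → F x = 0) :
    ∫⁻ x, F x ^ p ∂μ ≤ (∫⁻ x, F x * G x ^ (p - 1) ∂μ) ^ p * (∫⁻ x, G x ^ p ∂μ) ^ (1 - p) := by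
  have hsplit : ∀ᵐ x ∂μ, F x ^ p = (F x * G x ^ (p - 1)) ^ p * G x ^ (p * (1 - p)) := by
    filter_upwards [hGtop, hFG] with x hxtop hx0
    rcases eq_or_ne (F x) 0 with hF0 | hF0
    · simp [hF0, hp0]
    rw [ENNReal.mul_rpow_of_nonneg _ _ hp0.le, mul_assoc, ← ENNReal.rpow_mul,
      ← ENNReal.rpow_add _ _ (fun h => hF0 (hx0 h)) hxtop,
      show (p - 1) * p + p * (1 - p) = 0 by ring,
      ENNReal.rpow_zero, mul_one]
  have hHolder := ENNReal.lintegral_mul_le_Lp_mul_Lq μ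
    (Real.holderConjugate_one_div hp0 (sub_pos.2 hp1) (add_sub_cancel p 1))
    (f := fun x => (F x * G x ^ (p - 1)) ^ p) (g := fun x => G x ^ (p * (1 - p)))
    ((hF.mul (hG.pow_const _)).pow_const p) (hG.pow_const _)
  rw [one_div_one_div, one_div_one_div] at hHolder
  calc ∫⁻ x, F x ^ p ∂μ = ∫⁻ x, (F x * G x ^ (p - 1)) ^ p * G x ^ (p * (1 - p)) ∂μ :=
        lintegral_congr_ae hsplit
    _ ≤ _ := hHolder
    _ = _ := by
        congr 3 <;> funext x <;> rw [← ENNReal.rpow_mul]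
        · rw [mul_one_div_cancel hp0.ne', ENNReal.rpow_one]
        · rw [mul_one_div, mul_div_assoc, div_self (by linarith), mul_one]

theorem lintegral_rpow_le_of_lintegral_mul_rpow_sub_one_le {α : Type*} [MeasurableSpace α]
    {μ : Measure α} {p : ℝ} (hp0 : 0 < p) (hp1 : p < 1) {F G : α → ℝ≥0∞}
    (hF : AEMeasurable F μ) (hG : AEMeasurable G μ) (hGtop : ∀ᵐ x ∂μ, G x ≠ ⊤)
    (hFG : ∀ᵐ x ∂μ, G x = 0 → F x = 0) {B : ℝ≥0∞}
    (hB : ∫⁻ x, F x * G x ^ (p - 1) ∂μ ≤ B * ∫⁻ x, G x ^ p ∂μ) :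
    ∫⁻ x, F x ^ p ∂μ ≤ B ^ p * ∫⁻ x, G x ^ p ∂μ :=
  calc ∫⁻ x, F x ^ p ∂μ
      ≤ (∫⁻ x, F x * G x ^ (p - 1) ∂μ) ^ p * (∫⁻ x, G x ^ p ∂μ) ^ (1 - p) :=
        lintegral_rpow_le_lintegral_mul_rpow_sub_one hp0 hp1 hF hG hGtop hFG
    _ ≤ (B * ∫⁻ x, G x ^ p ∂μ) ^ p * (∫⁻ x, G x ^ p ∂μ) ^ (1 - p) := by gcongr
    _ = B ^ p * ∫⁻ x, G x ^ p ∂μ := by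
        rw [ENNReal.mul_rpow_of_nonneg _ _ hp0.le, mul_assoc,
          ← ENNReal.rpow_add_of_nonneg _ _ hp0.le (by linarith), add_sub_cancel, ENNReal.rpow_one]

section DilatedSum

variable {n : ℕ} {ι : Type*} (c : ι → En n) (h : ι → ℝ) (a : ι → ℝ≥0∞)

/-- `∑ a_Q χ_{2Q}`: dilating by `2` already suffices, and `2Q ⊆ 2√n Q`. -/
def dilatedSum (x : En n) : ℝ≥0∞ := ∑' i, (cube (c i) (2 * h i)).indicator (fun _ => a i) x

def essInfOnCube (i : ι) : ℝ≥0∞ := essInf (dilatedSum c h a) (volume.restrict (cube (c i) (h i)))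

lemma measurable_dilatedSum [Countable ι] : Measurable (dilatedSum c h a) :=
  .tsum fun _ => measurable_const.indicator (measurableSet_cube _ _)

variable {c h a}

lemma sum_le_dilatedSum (s : Finset ι) (x : En n) :
    ∑ i ∈ s with x ∈ cube (c i) (2 * h i), a i ≤ dilatedSum c h a x := by
  rw [Finset.sum_filter]
  exact ENNReal.sum_le_tsum _

lemma le_dilatedSum {i : ι} {x : En n} (hx : x ∈ cube (c i) (2 * h i)) : a i ≤ dilatedSum c h a x :=
  (indicator_of_mem hx (fun _ => a i)).symm.le.trans (ENNReal.le_tsum i)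

lemma le_essInfOnCube {i : ι} (hh : 0 ≤ h i) : a i ≤ essInfOnCube c h a i :=
  le_essInf_of_ae_le _ <| (ae_restrict_iff' (measurableSet_cube _ _)).2 <| ae_of_all _ fun _ hx =>
    le_dilatedSum (cube_subset_cube _ (by linarith) hx)

lemma tsum_indicator_essInfOnCube_lt_le (hpos : ∀ i, 0 < h i) (T : ℝ≥0∞) (x : En n) :
    ∑' i, (cube (c i) (h i)).indicator (fun _ => if essInfOnCube c h a i < T then a i else 0) x
      ≤ (4 ^ n + 1) * T := by
  rw [ENNReal.tsum_eq_iSup_sum]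
  refine iSup_le fun s => ?_
  simp only [Set.indicator_apply, ← ite_and, ← Finset.sum_filter]
  refine sum_le_of_exists_mem_cube_sum_lt _ hpos (fun j hj => (Finset.mem_filter.1 hj).2.1) a T
    fun j hj => ?_
  obtain ⟨z, hz, hzT⟩ := exists_mem_lt_of_essInf_restrict_lt (measurableSet_cube _ _)
    (Finset.mem_filter.1 hj).2.2
  exact ⟨z, hz, (sum_le_dilatedSum _ z).trans_lt hzT⟩

lemma tsum_ite_essInfOnCube_lt_le_lintegral_min [Countable ι] (hpos : ∀ i, 0 < h i) (T : ℝ≥0∞) :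
    ∑' i, (if essInfOnCube c h a i < T then a i * volume (cube (c i) (h i)) else 0)
      ≤ ∫⁻ x, min (dilatedSum c h a x) ((4 ^ n + 1) * T) := by
  calc ∑' i, (if essInfOnCube c h a i < T then a i * volume (cube (c i) (h i)) else 0)
      = ∑' i, ∫⁻ x, (cube (c i) (h i)).indicator
          (fun _ => if essInfOnCube c h a i < T then a i else 0) x := by
        simp only [lintegral_indicator_const (measurableSet_cube _ _), ite_mul, zero_mul]
    _ = ∫⁻ x, ∑' i, (cube (c i) (h i)).indicator
          (fun _ => if essInfOnCube c h a i < T then a i else 0) x :=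
        (lintegral_tsum fun _ =>
          (measurable_const.indicator (measurableSet_cube _ _)).aemeasurable).symm
    _ ≤ ∫⁻ x, min (dilatedSum c h a x) ((4 ^ n + 1) * T) := by
        refine lintegral_mono fun x => le_min (ENNReal.tsum_le_tsum fun i => ?_)
          (tsum_indicator_essInfOnCube_lt_le hpos T x)
        refine (indicator_le_indicator (by split_ifs <;> simp)).trans
          (indicator_le_indicator_of_subset (cube_subset_cube _ (by linarith [hpos i]))
            (fun _ => zero_le) x)

end DilatedSum

section CubeFamily

variable {n : ℕ} {ι : Type*} [Countable ι] {c : ι → En n} {h : ι → ℝ} {u : ι → En n → ℝ≥0∞}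
  {a : ι → ℝ≥0∞}

lemma ae_tsum_eq_zero_of_dilatedSum_eq_zero (hh : ∀ i, 0 ≤ h i) (hu : ∀ i, AEMeasurable (u i))
    (hsupp : ∀ i, support (u i) ⊆ cube (c i) (h i))
    (ha : ∀ i, ∫⁻ x, u i x ≤ a i * volume (cube (c i) (h i))) :
    ∀ᵐ x, dilatedSum c h a x = 0 → ∑' i, u i x = 0 := by
  have hzero : ∀ i, ∀ᵐ x, a i = 0 → u i x = 0 := fun i => by
    by_cases hai : a i = 0
    · have hui : ∫⁻ x, u i x = 0 := le_antisymm ((ha i).trans_eq (by simp [hai])) zero_le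
      filter_upwards [(lintegral_eq_zero_iff' (hu i)).1 hui] with x hx using fun _ => hx
    · exact ae_of_all _ fun _ h => absurd h hai
  filter_upwards [ae_all_iff.2 hzero] with x hx hG
  refine ENNReal.tsum_eq_zero.2 fun i => by_contra fun hui => hui (hx i ?_)
  exact le_zero_iff.1 (hG ▸ le_dilatedSum (cube_subset_cube _ (by linarith [hh i]) (hsupp i hui)))

lemma lintegral_tsum_mul_rpow_sub_one_le (hpos : ∀ i, 0 < h i) (hu : ∀ i, AEMeasurable (u i))
    (hsupp : ∀ i, support (u i) ⊆ cube (c i) (h i))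
    (ha : ∀ i, ∫⁻ x, u i x ≤ a i * volume (cube (c i) (h i))) {p : ℝ} (hp0 : 0 < p) (hp1 : p < 1) :
    ∫⁻ x, (∑' i, u i x) * dilatedSum c h a x ^ (p - 1)
      ≤ ENNReal.ofReal (((4 : ℝ) ^ n + 1) ^ (1 - p) / p) * ∫⁻ x, dilatedSum c h a x ^ p := by
  have hK : ∀ t : ℝ, (4 ^ n + 1) * ENNReal.ofReal t = ENNReal.ofReal (((4 : ℝ) ^ n + 1) * t) := by
    intro t
    rw [ENNReal.ofReal_mul (by positivity)]
    norm_num [ENNReal.ofReal_add, ENNReal.ofReal_pow]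
  calc ∫⁻ x, (∑' i, u i x) * dilatedSum c h a x ^ (p - 1)
      = ∑' i, ∫⁻ x, u i x * dilatedSum c h a x ^ (p - 1) := by
        simp only [← ENNReal.tsum_mul_right]
        exact lintegral_tsum fun i =>
          (hu i).mul ((measurable_dilatedSum c h a).pow_const _).aemeasurable
    _ ≤ ∑' i, a i * volume (cube (c i) (h i)) * essInfOnCube c h a i ^ (p - 1) :=
        ENNReal.tsum_le_tsum fun i => (lintegral_mul_rpow_le_mul_essInf_rpow (hu i) (hsupp i)
          (by linarith)).trans (mul_le_mul_left (ha i) _)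
    _ ≤ _ := by
        refine tsum_mul_rpow_sub_one_le_lintegral_rpow hp0 hp1 (by positivity)
          (measurable_dilatedSum c h a) (fun i hi => ?_) fun t => ?_
        · exact ne_bot_of_le_ne_bot (left_ne_zero_of_mul hi) (le_essInfOnCube (hpos i).le)
        · rw [← hK]
          exact tsum_ite_essInfOnCube_lt_le_lintegral_min hpos (ENNReal.ofReal t)

lemma lintegral_tsum_rpow_le_of_lt_one (hpos : ∀ i, 0 < h i) (hu : ∀ i, AEMeasurable (u i))
    (hsupp : ∀ i, support (u i) ⊆ cube (c i) (h i))
    (ha : ∀ i, ∫⁻ x, u i x ≤ a i * volume (cube (c i) (h i))) {p : ℝ} (hp0 : 0 < p) (hp1 : p < 1) :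
    ∫⁻ x, (∑' i, u i x) ^ p
      ≤ ENNReal.ofReal (((4 : ℝ) ^ n + 1) ^ (1 - p) / p) ^ p * ∫⁻ x, dilatedSum c h a x ^ p := by
  have hG := measurable_dilatedSum c h a
  rcases eq_or_ne (∫⁻ x, dilatedSum c h a x ^ p) ⊤ with htop | htop
  · rw [htop, ENNReal.mul_top (ENNReal.rpow_pos (ENNReal.ofReal_pos.2 (by positivity))
      ENNReal.ofReal_ne_top).ne']
    exact le_top
  refine lintegral_rpow_le_of_lintegral_mul_rpow_sub_one_le hp0 hp1 (.tsum hu)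
    hG.aemeasurable ?_ (ae_tsum_eq_zero_of_dilatedSum_eq_zero (fun i => (hpos i).le) hu hsupp ha)
    (lintegral_tsum_mul_rpow_sub_one_le hpos hu hsupp ha hp0 hp1)
  filter_upwards [ae_lt_top (hG.pow_const p) htop] with x hx hxtop
  simp [hxtop, ENNReal.top_rpow_of_pos hp0] at hx

lemma lintegral_tsum_le_lintegral_dilatedSum (hh : ∀ i, 0 ≤ h i) (hu : ∀ i, AEMeasurable (u i))
    (ha : ∀ i, ∫⁻ x, u i x ≤ a i * volume (cube (c i) (h i))) :
    ∫⁻ x, ∑' i, u i x ≤ ∫⁻ x, dilatedSum c h a x :=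
  calc ∫⁻ x, ∑' i, u i x = ∑' i, ∫⁻ x, u i x := lintegral_tsum hu
    _ ≤ ∑' i, a i * volume (cube (c i) (2 * h i)) := ENNReal.tsum_le_tsum fun i =>
        (ha i).trans (mul_le_mul_right (measure_mono (cube_subset_cube _ (by linarith [hh i]))) _)
    _ = ∫⁻ x, dilatedSum c h a x := by
        simp only [dilatedSum]
        rw [lintegral_tsum fun i =>
          (measurable_const.indicator (measurableSet_cube _ _)).aemeasurable]
        simp only [lintegral_indicator_const (measurableSet_cube _ _)]

theorem rpow_lintegral_tsum_rpow_le (hpos : ∀ i, 0 < h i) (hu : ∀ i, AEMeasurable (u i))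
    (hsupp : ∀ i, support (u i) ⊆ cube (c i) (h i))
    (ha : ∀ i, ∫⁻ x, u i x ≤ a i * volume (cube (c i) (h i))) {p : ℝ} (hp0 : 0 < p) (hp1 : p ≤ 1) :
    (∫⁻ x, (∑' i, u i x) ^ p) ^ (1 / p)
      ≤ ENNReal.ofReal (((4 : ℝ) ^ n + 1) / p) * (∫⁻ x, dilatedSum c h a x ^ p) ^ (1 / p) := by
  have hK : (1 : ℝ) ≤ 4 ^ n + 1 := by linarith [pow_nonneg (by norm_num : (0 : ℝ) ≤ 4) n]
  rcases hp1.eq_or_lt with rfl | hp1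
  · simp only [ENNReal.rpow_one, div_one]
    refine (lintegral_tsum_le_lintegral_dilatedSum (fun i => (hpos i).le) hu ha).trans
      (le_mul_of_one_le_left zero_le ?_)
    rw [← ENNReal.ofReal_one]
    exact ENNReal.ofReal_le_ofReal hK
  calc (∫⁻ x, (∑' i, u i x) ^ p) ^ (1 / p)
      ≤ (ENNReal.ofReal (((4 : ℝ) ^ n + 1) ^ (1 - p) / p) ^ p
          * ∫⁻ x, dilatedSum c h a x ^ p) ^ (1 / p) :=
        ENNReal.rpow_le_rpow (lintegral_tsum_rpow_le_of_lt_one hpos hu hsupp ha hp0 hp1)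
          (by positivity)
    _ = ENNReal.ofReal (((4 : ℝ) ^ n + 1) ^ (1 - p) / p)
          * (∫⁻ x, dilatedSum c h a x ^ p) ^ (1 / p) := by
        rw [ENNReal.mul_rpow_of_nonneg _ _ (by positivity), ← ENNReal.rpow_mul,
          mul_one_div_cancel hp0.ne', ENNReal.rpow_one]
    _ ≤ _ := by
        gcongr
        exact (rpow_le_rpow_of_exponent_le hK (by linarith)).trans_eq (rpow_one _)

end CubeFamily

lemma lintegral_ofReal_eq_average_mul_volume_cube {n : ℕ} {f : En n → ℝ} {c : En n} {h : ℝ}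
    (hh : 0 < h) (hf : Integrable f) (hnn : ∀ x, 0 ≤ f x) (hsupp : support f ⊆ cube c h) :
    ∫⁻ x, ENNReal.ofReal (f x)
      = ENNReal.ofReal ((1 / h ^ n) * ∫ z in cube c h, f z) * volume (cube c h) := by
  rw [setIntegral_eq_integral_of_forall_compl_eq_zero fun x hx => notMem_support.1 (hx <| hsupp ·),
    volume_cube _ hh.le, ← ENNReal.ofReal_mul (mul_nonneg (by positivity) (integral_nonneg hnn)),
    mul_comm, one_div, mul_inv_cancel_left₀ (pow_ne_zero _ hh.ne'),
    ofReal_integral_eq_lintegral_ofReal hf (ae_of_all _ hnn)]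

theorem lp_sum_le_lp_averages_general
    (n : ℕ) (p : ℝ) (hp0 : 0 < p) (hp1 : p ≤ 1) :
    ∃ C : ℝ, 0 < C ∧
      ∀ (ι : Type) (_ : Countable ι) (c : ι → En n) (h : ι → ℝ)
        (f : ι → En n → ℝ),
        (∀ i, 0 < h i) →
        (∀ i, Integrable (f i) volume) →
        (∀ i x, 0 ≤ f i x) →
        (∀ i, Function.support (f i) ⊆ cube (c i) (h i)) →
        (∫⁻ x : En n, (∑' i : ι, ENNReal.ofReal (f i x)) ^ p ∂volume) ^ (1 / p) ≤
          ENNReal.ofReal C *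
            (∫⁻ x : En n,
                (∑' i : ι,
                  ENNReal.ofReal ((1 / h i ^ n) * ∫ z in cube (c i) (h i), f i z) *
                    (cube (c i) (2 * Real.sqrt n * h i)).indicator
                      (fun _ => (1 : ℝ≥0∞)) x) ^ p ∂volume) ^ (1 / p) := by
  refine ⟨((4 : ℝ) ^ n + 1) / p, by positivity, fun ι _ c h f hpos hint hnn hsupp => ?_⟩
  set a : ι → ℝ≥0∞ := fun i => ENNReal.ofReal ((1 / h i ^ n) * ∫ z in cube (c i) (h i), f i z)
  have hdilate : ∀ x, dilatedSum c h a x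
      ≤ ∑' i, a i * (cube (c i) (2 * √n * h i)).indicator (fun _ => 1) x := fun x =>
    ENNReal.tsum_le_tsum fun i => by
      rw [show 2 * √n * h i = √n * (2 * h i) by ring]
      refine (indicator_le_indicator_of_subset (cube_subset_cube_sqrt_mul _ (by linarith [hpos i]))
        (fun _ => zero_le) x).trans_eq ?_
      simp [indicator_apply]
  calc _ ≤ ENNReal.ofReal (((4 : ℝ) ^ n + 1) / p) * (∫⁻ x, dilatedSum c h a x ^ p) ^ (1 / p) :=
        rpow_lintegral_tsum_rpow_le hpos (fun i => (hint i).aemeasurable.ennreal_ofReal)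
          (fun i => (support_comp_subset ENNReal.ofReal_zero _).trans (hsupp i))
          (fun i => (lintegral_ofReal_eq_average_mul_volume_cube (hpos i) (hint i) (hnn i)
            (hsupp i)).le) hp0 hp1
    _ ≤ _ := by
        gcongr
        exact hdilate _

/-- Grafakos–Kalton lemma: the `L^p` quasinorm (`0 < p ≤ 1`) of a sum
of nonnegative functions supported in cubes is controlled by that of the sum of their
averages spread over the dilated cubes `Q* = 2√n Q`. -/
theorem lp_sum_le_lp_averages
    (n : ℕ) (hn : 0 < n) (p : ℝ) (hp0 : 0 < p) (hp1 : p ≤ 1) :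
    ∃ C : ℝ, 0 < C ∧
      ∀ (ι : Type) (_ : Countable ι) (c : ι → En n) (h : ι → ℝ)
        (f : ι → En n → ℝ),
        (∀ i, 0 < h i) →
        (∀ i, Integrable (f i) volume) →
        (∀ i x, 0 ≤ f i x) →
        (∀ i, Function.support (f i) ⊆ cube (c i) (h i)) →
        (∫⁻ x : En n, (∑' i : ι, ENNReal.ofReal (f i x)) ^ p ∂volume) ^ (1 / p) ≤
          ENNReal.ofReal C *
            (∫⁻ x : En n,
                (∑' i : ι,
                  ENNReal.ofReal ((1 / h i ^ n) * ∫ z in cube (c i) (h i), f i z) *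
                    (cube (c i) (2 * Real.sqrt n * h i)).indicator
                      (fun _ => (1 : ℝ≥0∞)) x) ^ p ∂volume) ^ (1 / p) :=
  lp_sum_le_lp_averages_general n p hp0 hp1

end
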